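/- The ◇-type system rewritten over the lattice ℤ(a+2b): As subsets of F one has the equality R(C^∨C_l^{(2)◇}) = (R(BC_l)_s + ℤ(a+2b) + ℤb) ∪ (R(BC_l)_m + ℤ(a+2b) + 2ℤb) ∪ (R(BC_l)_l + ℤ(a+2b) + 4ℤb). Consequently the linear automorphism of F fixing each ε_i and sending a ↦ a + 2b, b ↦ b carries R(C^∨BC_l^{(1)}) with the roles of a and b exchanged onto R(C^∨C_l^{(2)◇}). -/

import Mathlib

open Pointwise

noncomputable section

/-- The ambient space `F = ℝ^{l+2}`, with coordinates `0,…,l-1` for the finite part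
and coordinates `l, l+1` corresponding to the radical vectors `a, b`. -/
abbrev V (l : ℕ) : Type := Fin (l + 2) → ℝ

/-- The orthonormal vectors `ε_i`. -/
def εv (l : ℕ) (i : Fin l) : V l := Pi.single (Fin.castAdd 2 i) 1

/-- The radical vector `a`. -/
def av (l : ℕ) : V l := Pi.single (Fin.natAdd l (0 : Fin 2)) 1

/-- The radical vector `b`. -/
def bv (l : ℕ) : V l := Pi.single (Fin.natAdd l (1 : Fin 2)) 1

/-- The positive semi-definite symmetric bilinear form `I` of signature `(l,2,0)`,
with radical `ℝa + ℝb`. -/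
def Iform (l : ℕ) (x y : V l) : ℝ :=
  ∑ i : Fin l, x (Fin.castAdd 2 i) * y (Fin.castAdd 2 i)

/-- Short roots of the finite root system `BC_l`. -/
def BCs (l : ℕ) : Set (V l) := ⋃ i : Fin l, {εv l i, -εv l i}

/-- Middle-length roots of the finite root system `BC_l`. -/
def BCm (l : ℕ) : Set (V l) :=
  ⋃ (i : Fin l) (j : Fin l) (_ : i ≠ j),
    {εv l i + εv l j, εv l i - εv l j, -εv l i - εv l j}

/-- Long roots of the finite root system `BC_l`. -/
def BCl (l : ℕ) : Set (V l) := ⋃ i : Fin l, {(2 : ℝ) • εv l i, -((2 : ℝ) • εv l i)}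

/-- The finite root system `BC_l`. -/
def BCfull (l : ℕ) : Set (V l) := BCs l ∪ BCm l ∪ BCl l

/-- The subset `(kℤ)v` of `F`. -/
def Zv (l : ℕ) (k : ℤ) (v : V l) : Set (V l) := {x | ∃ n : ℤ, x = ((k * n : ℤ) : ℝ) • v}

/-- The subset `(kℤ)a`. -/
def Za (l : ℕ) (k : ℤ) : Set (V l) := Zv l k (av l)

/-- The subset `(kℤ)b`. -/
def Zb (l : ℕ) (k : ℤ) : Set (V l) := Zv l k (bv l)

/-- The subset `(1+2ℤ)a`. -/
def oddZa (l : ℕ) : Set (V l) := {x | ∃ n : ℤ, x = ((1 + 2 * n : ℤ) : ℝ) • av l}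

/-- The subset `L_{i,j}^{s1,s2} = {s2·m·a + s1·n·b : (m-i)(n-j) ≡ 0 mod 2}`;
`L_{i,j} = Lset l i j 1 1`. -/
def Lset (l : ℕ) (i j s1 s2 : ℤ) : Set (V l) :=
  {x | ∃ m n : ℤ, (2 : ℤ) ∣ ((m - i) * (n - j)) ∧
    x = ((s2 * m : ℤ) : ℝ) • av l + ((s1 * n : ℤ) : ℝ) • bv l}

/-- The subset `{ma + 2nb : m ≡ n mod 2}` occurring in the ◇-type system. -/
def diaL (l : ℕ) : Set (V l) :=
  {x | ∃ m n : ℤ, (2 : ℤ) ∣ (m - n) ∧ x = ((m : ℤ) : ℝ) • av l + ((2 * n : ℤ) : ℝ) • bv l}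

/-- The four types of non-reduced affine root systems. -/
inductive AffType | BCC | CvBC | BBv | CvC

/-- First tier number: the multiplier of `ℤb` on the middle part. -/
def tfm : AffType → ℤ | .BCC => 1 | .CvBC => 2 | .BBv => 1 | .CvC => 2

/-- The multiplier of `ℤb` on the long part. -/
def tfl : AffType → ℤ | .BCC => 1 | .CvBC => 4 | .BBv => 2 | .CvC => 2

/-- Short part of the affine root system `R(X_l)`. -/
def AffS (l : ℕ) (_X : AffType) : Set (V l) := BCs l + Zb l 1

/-- Middle part of the affine root system `R(X_l)`. -/
def AffM (l : ℕ) (X : AffType) : Set (V l) := BCm l + Zb l (tfm X)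

/-- Long part of the affine root system `R(X_l)`. -/
def AffL (l : ℕ) (X : AffType) : Set (V l) := BCl l + Zb l (tfl X)

/-- The affine root system `R(X_l)` for `X ∈ {BCC, C^∨BC, BB^∨, C^∨C}`. -/
def Aff (l : ℕ) (X : AffType) : Set (V l) := AffS l X ∪ AffM l X ∪ AffL l X

/-- The reduced classical types `BC_l^{(1,2)}, BC_l^{(4,2)}, BC_l^{(2,2)σ}(1), BC_l^{(2,2)σ}(2)`
(for `X = BCC, C^∨BC, BB^∨, C^∨C` respectively). -/
def redClassical (l : ℕ) (X : AffType) : Set (V l) :=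
  (AffS l X + Za l 1) ∪ (AffM l X + Za l 1) ∪ (AffL l X + oddZa l)

/-- `R(BC_l^{(1,1)∗})`. -/
def RBC11star (l : ℕ) : Set (V l) :=
  (AffS l .BCC + Za l 1) ∪ (AffM l .BCC + Za l 1) ∪ (BCl l + Lset l 1 1 1 1)

/-- `R(BC_l^{(4,4)∗})`. -/
def RBC44star (l : ℕ) : Set (V l) :=
  (BCs l + Lset l 1 1 1 1) ∪ (AffM l .CvBC + Za l 2) ∪ (AffL l .CvBC + Za l 4)

/-- `R(X_l^{(1)})`. -/
def E1 (l : ℕ) (X : AffType) : Set (V l) := Aff l X + Za l 1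

/-- `R(X_l^{(2)}(i))`. -/
def E2 (l : ℕ) (X : AffType) (i : ℤ) : Set (V l) :=
  (AffS l X + Za l 1) ∪ (AffM l X + Za l i) ∪ (AffL l X + Za l 2)

/-- `R(X_l^{(4)})`. -/
def E4 (l : ℕ) (X : AffType) : Set (V l) :=
  (AffS l X + Za l 1) ∪ (AffM l X + Za l 2) ∪ (AffL l X + Za l 4)

/-- `R(BCC_l^{(1)∗})`-type systems: `BCC1star l 0 0 = R(BCC_l^{(1)∗_0})`,
`BCC1star l 0 1 = R(BCC_l^{(1)∗_{0'}})`, `BCC1star l 1 1 = R(BCC_l^{(1)∗_1}) = R(BC_l^{(1,1)∗})`. -/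
def BCC1star (l : ℕ) (i j : ℤ) : Set (V l) :=
  (AffS l .BCC + Za l 1) ∪ (AffM l .BCC + Za l 1) ∪ (BCl l + Lset l i j 1 1)

/-- `R(BCC_l^{(2)∗_p})`. -/
def BCC2star (l : ℕ) (p : ℤ) : Set (V l) :=
  (AffS l .BCC + Za l 1) ∪ (AffM l .BCC + Za l 2) ∪ (BCl l + Lset l p p 1 2)

/-- `R(C^∨BC_l^{(2)∗_p})`. -/
def CvBC2star (l : ℕ) (p : ℤ) : Set (V l) :=
  (BCs l + Lset l p p 1 1) ∪ (AffM l .CvBC + Za l 2) ∪ (AffL l .CvBC + Za l 2)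

/-- `R(C^∨BC_l^{(4)∗})`-type systems: `CvBC4star l 0 0 = R(C^∨BC_l^{(4)∗_0})`,
`CvBC4star l 0 1 = R(C^∨BC_l^{(4)∗_{0'}})`, `CvBC4star l 1 1 = R(C^∨BC_l^{(4)∗_1}) = R(BC_l^{(4,4)∗})`. -/
def CvBC4star (l : ℕ) (i j : ℤ) : Set (V l) :=
  (BCs l + Lset l i j 1 1) ∪ (AffM l .CvBC + Za l 2) ∪ (AffL l .CvBC + Za l 4)

/-- `R(BB_2^{∨(2)∗})` (its defining pattern, written for general `l`). -/
def BB2star (l : ℕ) : Set (V l) :=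
  (BCs l + Za l 1 + Zb l 1) ∪ (BCm l + Lset l 0 0 1 1) ∪ (BCl l + Za l 2 + Zb l 2)

/-- `R(C^∨C_l^{(1)∗_p})`. -/
def CvC1star (l : ℕ) (p : ℤ) : Set (V l) :=
  (AffS l .CvC + Za l 1) ∪ (AffM l .CvC + Za l 1) ∪ (BCl l + Lset l p p 2 1)

/-- `R(C^∨C_l^{(2)∗})`-type systems: `CvC2star l 0 0 = R(C^∨C_l^{(2)∗_0})`,
`CvC2star l 1 1 = R(C^∨C_l^{(2)∗_1})`, `CvC2star l 1 0 = R(C^∨C_l^{(2)∗_{1'}})`. -/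
def CvC2star (l : ℕ) (i j : ℤ) : Set (V l) :=
  (BCs l + Lset l 0 0 1 1) ∪ (AffM l .CvC + Za l 2) ∪ (BCl l + Lset l i j 2 2)

/-- `R(C^∨C_l^{(2)∗_s})`. -/
def CvC2starS (l : ℕ) : Set (V l) :=
  (BCs l + Lset l 0 0 1 1) ∪ (AffM l .CvC + Za l 2) ∪ (AffL l .CvC + Za l 2)

/-- `R(C^∨C_l^{(2)∗_l})`. -/
def CvC2starL (l : ℕ) : Set (V l) :=
  (AffS l .CvC + Za l 1) ∪ (AffM l .CvC + Za l 2) ∪ (BCl l + Lset l 0 0 2 2)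

/-- `R(C^∨C_l^{(4)∗_p})`. -/
def CvC4star (l : ℕ) (p : ℤ) : Set (V l) :=
  (BCs l + Lset l p p 1 1) ∪ (AffM l .CvC + Za l 2) ∪ (AffL l .CvC + Za l 4)

/-- `R(C^∨C_l^{(2)◇})`. -/
def CvC2dia (l : ℕ) : Set (V l) :=
  (AffS l .CvC + Za l 1) ∪ (AffM l .CvC + Za l 1) ∪ (BCl l + diaL l)

/-- The reflection `w_α`. -/
def reflV (l : ℕ) (α x : V l) : V l := x - (2 * Iform l x α / Iform l α α) • α

/-- A generalized root system in `(F, I)`; since `I` has signature `(l,2,0)`, this is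
exactly an elliptic root system. -/
structure IsERS (l : ℕ) (R : Set (V l)) : Prop where
  /-- `R` is discrete. -/
  discrete : ∀ x ∈ R, ∃ ε > 0, ∀ y ∈ R, ‖x - y‖ < ε → y = x
  /-- The root lattice `Q(R)` is full in `F`. -/
  spans : Submodule.span ℝ R = ⊤
  /-- roots are non-isotropic. -/
  nonisotropic : ∀ α ∈ R, Iform l α α ≠ 0
  /-- integrality: `2 I(α,β)/I(α,α) ∈ ℤ`. -/
  integral : ∀ α ∈ R, ∀ β ∈ R, ∃ n : ℤ, 2 * Iform l α β = (n : ℝ) * Iform l α α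
  /-- each reflection `w_α` maps `R` onto `R`. -/
  reflects : ∀ α ∈ R, reflV l α '' R = R
  /-- irreducibility. -/
  irred : ∀ R1 R2 : Set (V l), R1 ∪ R2 = R →
    (∀ x ∈ R1, ∀ y ∈ R2, Iform l x y = 0) → R1 = ∅ ∨ R2 = ∅

/-- `R` is reduced. -/
def IsReducedRS (l : ℕ) (R : Set (V l)) : Prop := ∀ α ∈ R, (2 : ℝ) • α ∉ R

/-- `R` is non-reduced. -/
def IsNonReducedRS (l : ℕ) (R : Set (V l)) : Prop := ∃ α ∈ R, (2 : ℝ) • α ∈ R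

/-- The radical `ℝa + ℝb` of `I`. -/
def radSpan (l : ℕ) : Submodule ℝ (V l) := Submodule.span ℝ {av l, bv l}

/-- The marking line `G = ℝa`. -/
def Ga (l : ℕ) : Submodule ℝ (V l) := Submodule.span ℝ {av l}

/-- `G` is a marking of `R`: a one-dimensional subspace of `rad(I)` such that
`G ∩ Q(R)` is full in `G`. -/
def IsMarking (l : ℕ) (R : Set (V l)) (G : Submodule ℝ (V l)) : Prop :=
  G ≤ radSpan l ∧ Module.finrank ℝ G = 1 ∧
    ∃ v : V l, v ≠ 0 ∧ v ∈ G ∧ v ∈ AddSubgroup.closure R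

/-- `φ` rescales the form `I` by the factor `c`. -/
def IsSimilarity (l : ℕ) (φ : V l ≃ₗ[ℝ] V l) (c : ℝ) : Prop :=
  ∀ x y : V l, Iform l (φ x) (φ y) = c * Iform l x y

/-- Isomorphism of root systems in `(F, I)`. -/
def IsoRS (l : ℕ) (R R' : Set (V l)) : Prop :=
  ∃ (φ : V l ≃ₗ[ℝ] V l) (c : ℝ), 0 < c ∧ IsSimilarity l φ c ∧ φ '' R = R'

/-- Isomorphism of marked root systems (with marking `ℝa` on both sides). -/
def IsoRSa (l : ℕ) (R R' : Set (V l)) : Prop :=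
  ∃ (φ : V l ≃ₗ[ℝ] V l) (c : ℝ), 0 < c ∧ IsSimilarity l φ c ∧
    φ '' (Ga l : Set (V l)) = (Ga l : Set (V l)) ∧ φ '' R = R'

/-- The quotient `R/G` (image of `R` in `F/G`) is non-reduced. -/
def QuotNonReduced (l : ℕ) (R : Set (V l)) (G : Submodule ℝ (V l)) : Prop :=
  ∃ α ∈ R, ∃ β ∈ R, G.mkQ β = (2 : ℝ) • G.mkQ α

/-- The quotient `R/G` is isomorphic, as an affine root system, to the affine root system
`X ⊆ span(ε_1,…,ε_l,b)`: encoded via `p = ψ ∘ (F → F/G)` for an isomorphism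
`ψ : F/G ≅ span(ε_1,…,ε_l,b)` with `Ī(u,v) = c·I(ψu,ψv)` and `ψ(R/G) = X`. -/
def QuotIsType (l : ℕ) (R : Set (V l)) (G : Submodule ℝ (V l)) (X : Set (V l)) : Prop :=
  ∃ (p : V l →ₗ[ℝ] V l) (c : ℝ), 0 < c ∧
    LinearMap.ker p = G ∧
    LinearMap.range p = Submodule.span ℝ (Set.range (εv l) ∪ {bv l}) ∧
    (∀ x y : V l, Iform l x y = c * Iform l (p x) (p y)) ∧
    p '' R = X

end

/-! Since `m(a + 2b) = ma + 2mb`, the lattice `ℤ(a + 2b) + kℤb` equals `ℤa + kℤb` when `k ∣ 2`,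
and for `k = 4` it is `{ma + 2nb : m ≡ n mod 2}`. Hence the ◇-system is the system
`R(C^∨BC_l^{(1)})` with `ℤa` replaced by `ℤ(a + 2b)`, and `φ` fixes the finite parts and
sends `ℤa` to `ℤ(a + 2b)`. -/

section Lattices

variable {l : ℕ}

lemma Zv_add_smul_add_Zv_of_dvd {k c : ℤ} (hkc : k ∣ c) (v w : V l) :
    Zv l 1 (v + (c : ℝ) • w) + Zv l k w = Zv l 1 v + Zv l k w := by
  obtain ⟨d, rfl⟩ := hkc
  ext x
  simp only [Set.mem_add, Zv, Set.mem_ofPred_eq]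
  constructor
  · rintro ⟨_, ⟨m, rfl⟩, _, ⟨n, rfl⟩, rfl⟩
    exact ⟨_, ⟨m, rfl⟩, _, ⟨n + m * d, rfl⟩, by push_cast; module⟩
  · rintro ⟨_, ⟨m, rfl⟩, _, ⟨n, rfl⟩, rfl⟩
    exact ⟨_, ⟨m, rfl⟩, _, ⟨n - m * d, rfl⟩, by push_cast; module⟩

lemma Zv_add_two_smul_add_Zb_four :
    Zv l 1 (av l + (2 : ℝ) • bv l) + Zb l 4 = diaL l := by
  ext x
  simp only [Set.mem_add, Zv, Zb, diaL, Set.mem_ofPred_eq]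
  constructor
  · rintro ⟨_, ⟨m, rfl⟩, _, ⟨n, rfl⟩, rfl⟩
    exact ⟨m, m + 2 * n, ⟨-n, by ring⟩, by push_cast; module⟩
  · rintro ⟨m, n, ⟨d, hd⟩, rfl⟩
    obtain rfl : n = m - 2 * d := by omega
    exact ⟨_, ⟨m, rfl⟩, _, ⟨-d, rfl⟩, by push_cast; module⟩

lemma Zv_add_two_smul_add_Zb_of_dvd_two {k : ℤ} (hk : k ∣ 2) :
    Zv l 1 (av l + (2 : ℝ) • bv l) + Zb l k = Za l 1 + Zb l k := by
  simpa [Za, Zb] using Zv_add_smul_add_Zv_of_dvd hk (av l) (bv l)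

theorem CvC2dia_eq :
    CvC2dia l =
      (BCs l + Zv l 1 (av l + (2 : ℝ) • bv l) + Zb l 1)
        ∪ (BCm l + Zv l 1 (av l + (2 : ℝ) • bv l) + Zb l 2)
        ∪ (BCl l + Zv l 1 (av l + (2 : ℝ) • bv l) + Zb l 4) := by
  simp only [CvC2dia, AffS, AffM, tfm, add_assoc, add_comm (Zb l _) (Za l 1),
    Zv_add_two_smul_add_Zb_of_dvd_two (one_dvd 2), Zv_add_two_smul_add_Zb_of_dvd_two (dvd_refl 2),
    Zv_add_two_smul_add_Zb_four]

theorem E1_CvBC_eq :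
    E1 l .CvBC = (BCs l + Za l 1 + Zb l 1) ∪ (BCm l + Za l 1 + Zb l 2)
      ∪ (BCl l + Za l 1 + Zb l 4) := by
  simp only [E1, Aff, AffS, AffM, AffL, tfm, tfl, Set.union_add, add_right_comm _ (Za l 1)]

end Lattices

section Images

variable {l : ℕ} {F : Type*} [FunLike F (V l) (V l)] [LinearMapClass F ℝ (V l) (V l)]

lemma image_Zv (f : F) (k : ℤ) (v : V l) : f '' Zv l k v = Zv l k (f v) := by
  ext x
  simp only [Zv, Set.mem_image, Set.mem_ofPred_eq]
  constructor
  · rintro ⟨y, ⟨n, rfl⟩, rfl⟩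
    exact ⟨n, map_smul f _ v⟩
  · rintro ⟨n, rfl⟩
    exact ⟨_, ⟨n, rfl⟩, map_smul f _ v⟩

variable {f : F} (hf : ∀ i : Fin l, f (εv l i) = εv l i)
include hf

lemma image_BCs_of_fix_εv : f '' BCs l = BCs l := by
  simp [BCs, Set.image_iUnion, Set.image_insert_eq, hf, map_neg]

lemma image_BCm_of_fix_εv : f '' BCm l = BCm l := by
  simp [BCm, Set.image_iUnion, Set.image_insert_eq, hf, map_neg, map_add, map_sub]

lemma image_BCl_of_fix_εv : f '' BCl l = BCl l := by
  simp [BCl, Set.image_iUnion, Set.image_insert_eq, hf, map_neg, map_smul]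

end Images

theorem diamond_rewritten_general {l : ℕ} :
    CvC2dia l =
      (BCs l + Zv l 1 (av l + (2 : ℝ) • bv l) + Zb l 1)
        ∪ (BCm l + Zv l 1 (av l + (2 : ℝ) • bv l) + Zb l 2)
        ∪ (BCl l + Zv l 1 (av l + (2 : ℝ) • bv l) + Zb l 4) ∧
    ∀ φ : V l ≃ₗ[ℝ] V l, (∀ i : Fin l, φ (εv l i) = εv l i) →
      φ (av l) = av l + (2 : ℝ) • bv l → φ (bv l) = bv l →
      φ '' E1 l .CvBC = CvC2dia l := by
  refine ⟨CvC2dia_eq, fun φ hε ha hb => ?_⟩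
  have hZa : φ '' Za l 1 = Zv l 1 (av l + (2 : ℝ) • bv l) := by rw [Za, image_Zv, ha]
  have hZb (k : ℤ) : φ '' Zb l k = Zb l k := by rw [Zb, image_Zv, hb]
  simp only [E1_CvBC_eq, CvC2dia_eq, Set.image_union, Set.image_add, hZa, hZb,
    image_BCs_of_fix_εv hε, image_BCm_of_fix_εv hε, image_BCl_of_fix_εv hε]

/-- **The ◇-type system rewritten over the lattice `ℤ(a+2b)`**, and the resulting
exotic isomorphism `R(C^∨BC_l^{(1)}) ≅ R(C^∨C_l^{(2)◇})` via `a ↦ a + 2b`, `b ↦ b`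
(under which the roles of `a` and `b` are exchanged). -/
theorem diamond_rewritten {l : ℕ} (hl : 1 ≤ l) :
    CvC2dia l =
      (BCs l + Zv l 1 (av l + (2 : ℝ) • bv l) + Zb l 1)
        ∪ (BCm l + Zv l 1 (av l + (2 : ℝ) • bv l) + Zb l 2)
        ∪ (BCl l + Zv l 1 (av l + (2 : ℝ) • bv l) + Zb l 4) ∧
    ∀ φ : V l ≃ₗ[ℝ] V l, (∀ i : Fin l, φ (εv l i) = εv l i) →
      φ (av l) = av l + (2 : ℝ) • bv l → φ (bv l) = bv l →
      φ '' E1 l .CvBC = CvC2dia l :=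
  diamond_rewritten_general
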